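/- Every tailless dominant weight diagram of atypicality degree k > 0 can be transformed into a typical (atypicality 0) diagram by a finite sequence of elementary changes of types a), b), c), at), bt), ct) (and sign switches), none of which increases the degree of atypicality when read in the reverse direction; i.e., the rewriting system given by the elementary changes terminates at atypicality 0. -/

import Mathlib

/-- Symbols of a weight diagram. -/
inductive WSym where
  | empty | lt | gt | cross
deriving DecidableEq

/-- A dominant `SOSP(2m+1,2n)` weight diagram: `body s` is the symbol at the
non-tail position `s + 3/2`; the tail position `1/2` carries `tailX` crosses,
possibly a core symbol (`some true = >`, `some false = <`), and the diagram may
carry a sign (`sign = true` is `(+)`, relevant when `tailCore = none` and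
`tailX > 0`). -/
structure ODiag where
  body : ℕ → WSym
  tailX : ℕ
  tailCore : Option Bool
  sign : Bool

/-- The degree of atypicality: the total number of crosses. -/
noncomputable def atyp (d : ODiag) : ℕ :=
  d.tailX + {s | d.body s = WSym.cross}.ncard

/-- Modify a diagram body at the two adjacent positions `s`, `s + 1`. -/
def updTwo (f : ℕ → WSym) (s : ℕ) (x y : WSym) : ℕ → WSym :=
  fun t => if t = s then x else if t = s + 1 then y else f t

/-- The elementary changes a), b), c), at), bt), ct) of Section 6.3, together with
the sign switch. -/
inductive ElemStep : ODiag → ODiag → Prop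
  /-- a) `(×,∘) → (>,<)` at adjacent non-tail positions. -/
  | a (d : ODiag) (s : ℕ) (h1 : d.body s = WSym.cross) (h2 : d.body (s+1) = WSym.empty) :
      ElemStep d ⟨updTwo d.body s WSym.gt WSym.lt, d.tailX, d.tailCore, d.sign⟩
  /-- b), c) rightward: `(x,∘) → (∘,x)` for a core symbol `x`. -/
  | bcRight (d : ODiag) (s : ℕ) (x : WSym) (hx : x = WSym.lt ∨ x = WSym.gt)
      (h1 : d.body s = x) (h2 : d.body (s+1) = WSym.empty) :
      ElemStep d ⟨updTwo d.body s WSym.empty x, d.tailX, d.tailCore, d.sign⟩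
  /-- b), c) leftward: `(∘,x) → (x,∘)` for a core symbol `x`. -/
  | bcLeft (d : ODiag) (s : ℕ) (x : WSym) (hx : x = WSym.lt ∨ x = WSym.gt)
      (h1 : d.body s = WSym.empty) (h2 : d.body (s+1) = x) :
      ElemStep d ⟨updTwo d.body s x WSym.empty, d.tailX, d.tailCore, d.sign⟩
  /-- at) `(+)×^{k+1} ∘ → {>,×^k} <`. -/
  | at_ (d : ODiag) (k : ℕ) (hk : d.tailX = k + 1) (hcore : d.tailCore = none)
      (hsign : d.sign = true) (h0 : d.body 0 = WSym.empty) :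
      ElemStep d ⟨fun t => if t = 0 then WSym.lt else d.body t, k, some true, true⟩
  /-- bt) `{>,×^k} ∘ → (−)×^k >`. -/
  | btRight (d : ODiag) (hcore : d.tailCore = some true) (h0 : d.body 0 = WSym.empty) :
      ElemStep d ⟨fun t => if t = 0 then WSym.gt else d.body t, d.tailX, none, false⟩
  /-- bt) `(−)×^k > → {>,×^k} ∘`. -/
  | btLeft (d : ODiag) (hcore : d.tailCore = none) (hsign : d.sign = false)
      (h0 : d.body 0 = WSym.gt) :
      ElemStep d ⟨fun t => if t = 0 then WSym.empty else d.body t, d.tailX, some true, true⟩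
  /-- ct) `{<,×^k} ∘ → (−)×^k <`. -/
  | ctRight (d : ODiag) (hcore : d.tailCore = some false) (h0 : d.body 0 = WSym.empty) :
      ElemStep d ⟨fun t => if t = 0 then WSym.lt else d.body t, d.tailX, none, false⟩
  /-- ct) `(−)×^k < → {<,×^k} ∘`. -/
  | ctLeft (d : ODiag) (hcore : d.tailCore = none) (hsign : d.sign = false)
      (h0 : d.body 0 = WSym.lt) :
      ElemStep d ⟨fun t => if t = 0 then WSym.empty else d.body t, d.tailX, some false, true⟩
  /-- The sign switch `(±)×^k … → (∓)×^k …`. -/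
  | sw (d : ODiag) (hcore : d.tailCore = none) (hX : 0 < d.tailX) :
      ElemStep d ⟨d.body, d.tailX, none, !d.sign⟩

/-! Only a) and at) change the atypicality, each removing one cross; the other changes move core
symbols or the sign and keep every cross in place.

For the reduction, the body crosses are removed from right to left. To the right of the rightmost
cross there are only finitely many core symbols, so the block of them next to it can be pushed one
step to the right by b), c), freeing the neighbouring position for a). Once the body is cross-free,
the tail crosses are removed one at a time: free position `3/2` the same way, move a tail core
symbol out by bt) or ct), free `3/2` again, switch the sign to `(+)` and apply at). -/

open Relation

lemma atyp_le_of_cross_iff {d e : ODiag} (hX : e.tailX ≤ d.tailX)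
    (h : ∀ t, e.body t = .cross ↔ d.body t = .cross) : atyp e ≤ atyp d := by
  simp only [atyp, h]
  omega

lemma atyp_le_of_elemStep {d e : ODiag} (h : ElemStep d e) : atyp e ≤ atyp d := by
  cases h with
  | a s h1 h2 =>
    have hcross : {t | updTwo d.body s .gt .lt t = .cross} = {t | d.body t = .cross} \ {s} := by
      ext t; simp only [updTwo]; grind
    simp only [atyp, hcross]
    exact Nat.add_le_add_left (Set.ncard_sdiff_singleton_le _ _) _
  | sw => exact le_rfl
  | at_ _ hk => exact atyp_le_of_cross_iff (by simp [hk]) fun t => by grind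
  | bcRight _ _ hx | bcLeft _ _ hx =>
    exact atyp_le_of_cross_iff le_rfl fun t => by simp only [updTwo]; grind
  | btRight _ h0 | btLeft _ _ h0 | ctRight _ h0 | ctLeft _ _ h0 =>
    exact atyp_le_of_cross_iff le_rfl fun t => by grind

lemma exists_reach_empty_at_of_bound (n : ℕ) {d : ODiag} {s : ℕ}
    (hcross : ∀ t, s ≤ t → d.body t ≠ .cross)
    (hempty : ∀ t, s + n ≤ t → d.body t = .empty) :
    ∃ b, ReflTransGen ElemStep d { d with body := b } ∧ b s = .empty ∧
      (∀ t < s, b t = d.body t) ∧ (∀ t, s ≤ t → b t ≠ .cross) ∧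
      ∀ t, s + n < t → b t = .empty := by
  induction n generalizing s with
  | zero =>
    exact ⟨d.body, .refl, hempty s le_rfl, fun _ _ => rfl, hcross, fun t ht => hempty t ht.le⟩
  | succ n ih =>
    -- free `s + 1` first, then move the core symbol at `s` (if any) onto it by b) or c)
    obtain ⟨b, hreach, hb1, hbelow, hbcross, hbempty⟩ :=
      ih (s := s + 1) (fun t ht => hcross t (by omega)) (fun t ht => hempty t (by omega))
    by_cases hs : b s = .empty
    · refine ⟨b, hreach, hs, fun t ht => hbelow t (by omega), fun t ht => ?_,
        fun t ht => hbempty t (by omega)⟩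
      obtain rfl | ht := ht.eq_or_lt
      exacts [by simp [hs], hbcross t ht]
    have hcore : b s = .lt ∨ b s = .gt := by
      have hbs : b s ≠ .cross := hbelow s (by omega) ▸ hcross s le_rfl
      cases h : b s <;> simp_all
    refine ⟨updTwo b s .empty (b s), hreach.tail (ElemStep.bcRight _ s _ hcore rfl hb1),
      by simp [updTwo], fun t ht => ?_, fun t ht => ?_, fun t ht => ?_⟩ <;>
    simp only [updTwo] <;> grind

lemma exists_reach_empty_at {d : ODiag} {s : ℕ} (hfin : {t | d.body t ≠ .empty}.Finite)
    (hcross : ∀ t, s ≤ t → d.body t ≠ .cross) :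
    ∃ b, ReflTransGen ElemStep d { d with body := b } ∧ b s = .empty ∧
      (∀ t < s, b t = d.body t) ∧ (∀ t, s ≤ t → b t ≠ .cross) ∧
      {t | b t ≠ .empty}.Finite := by
  obtain ⟨B, hB⟩ := hfin.bddAbove
  have hempty : ∀ t, s + (B + 1) ≤ t → d.body t = .empty := fun t ht =>
    by_contra fun h => by have := hB h; omega
  obtain ⟨b, hreach, hs, hbelow, hbcross, hbempty⟩ :=
    exists_reach_empty_at_of_bound (B + 1) hcross hempty
  refine ⟨b, hreach, hs, hbelow, hbcross, (Set.finite_Iic (s + (B + 1))).subset fun t ht => ?_⟩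
  by_contra h
  exact ht (hbempty t (by simp only [Set.mem_Iic, not_le] at h; omega))

lemma finite_updTwo_ne_empty {f : ℕ → WSym} (hf : {t | f t ≠ .empty}.Finite) (s : ℕ)
    (x y : WSym) : {t | updTwo f s x y t ≠ .empty}.Finite :=
  ((hf.insert s).insert (s + 1)).subset fun t => by simp only [updTwo]; grind

lemma finite_ite_zero_ne_empty {f : ℕ → WSym} (hf : {t | f t ≠ .empty}.Finite) (x : WSym) :
    {t | (if t = 0 then x else f t) ≠ .empty}.Finite :=
  (hf.insert 0).subset fun t => by grind

lemma exists_reach_body_crossFree (N : ℕ) {d : ODiag} (hfin : {t | d.body t ≠ .empty}.Finite)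
    (hN : ∀ t, d.body t = .cross → t < N) :
    ∃ e, ReflTransGen ElemStep d e ∧ (∀ t, e.body t ≠ .cross) ∧
      {t | e.body t ≠ .empty}.Finite := by
  induction N generalizing d with
  | zero => exact ⟨d, .refl, fun t h => absurd (hN t h) (Nat.not_lt_zero t), hfin⟩
  | succ N ih =>
    by_cases hdN : d.body N ≠ .cross
    · exact ih hfin fun t ht => by grind
    rw [ne_eq, not_not] at hdN
    obtain ⟨b, hreach, hb1, hbelow, hbcross, hbfin⟩ :=
      exists_reach_empty_at (s := N + 1) hfin fun t ht h => by have := hN t h; omega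
    have hbN : b N = .cross := (hbelow N N.lt_succ_self).trans hdN
    obtain ⟨e, he, hecross, hefin⟩ :=
      ih (d := ⟨updTwo b N .gt .lt, d.tailX, d.tailCore, d.sign⟩)
        (finite_updTwo_ne_empty hbfin N _ _) fun t ht => by simp only [updTwo] at ht; grind
    exact ⟨e, (hreach.tail (ElemStep.a _ N hbN hb1)).trans he, hecross, hefin⟩

lemma exists_reach_tailCore_none {d : ODiag} (hcross : ∀ t, d.body t ≠ .cross)
    (hfin : {t | d.body t ≠ .empty}.Finite) :
    ∃ e, ReflTransGen ElemStep d e ∧ e.tailX = d.tailX ∧ e.tailCore = none ∧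
      (∀ t, e.body t ≠ .cross) ∧ {t | e.body t ≠ .empty}.Finite := by
  obtain ⟨b, hreach, hb0, -, hbcross, hbfin⟩ :=
    exists_reach_empty_at (s := 0) hfin fun t _ => hcross t
  cases hcore : d.tailCore with
  | none => exact ⟨_, hreach, rfl, hcore, fun t => hbcross t t.zero_le, hbfin⟩
  | some c =>
    cases c
    · exact ⟨_, hreach.tail (ElemStep.ctRight _ hcore hb0), rfl, rfl,
        fun t => by grind, finite_ite_zero_ne_empty hbfin _⟩
    · exact ⟨_, hreach.tail (ElemStep.btRight _ hcore hb0), rfl, rfl,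
        fun t => by grind, finite_ite_zero_ne_empty hbfin _⟩

lemma exists_reach_tailX_pred {d : ODiag} {k : ℕ} (hk : d.tailX = k + 1)
    (hcore : d.tailCore = none) (hcross : ∀ t, d.body t ≠ .cross)
    (hfin : {t | d.body t ≠ .empty}.Finite) :
    ∃ e, ReflTransGen ElemStep d e ∧ e.tailX = k ∧ (∀ t, e.body t ≠ .cross) ∧
      {t | e.body t ≠ .empty}.Finite := by
  obtain ⟨b, hreach, hb0, -, hbcross, hbfin⟩ :=
    exists_reach_empty_at (s := 0) hfin fun t _ => hcross t
  have hplus : ReflTransGen ElemStep { d with body := b } ⟨b, d.tailX, none, true⟩ := by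
    cases hsign : d.sign
    · exact .single <| by
        simpa [hsign, hcore] using ElemStep.sw { d with body := b } hcore (by simp [hk])
    · obtain ⟨_, _, _, _⟩ := d
      subst hsign hcore
      exact .refl
  exact ⟨_, (hreach.trans hplus).tail (ElemStep.at_ _ k hk rfl rfl hb0), rfl,
    fun t => by grind, finite_ite_zero_ne_empty hbfin _⟩

lemma exists_reach_atyp_eq_zero_of_body_crossFree (k : ℕ) {d : ODiag} (hk : d.tailX = k)
    (hcross : ∀ t, d.body t ≠ .cross) (hfin : {t | d.body t ≠ .empty}.Finite) :
    ∃ e, ReflTransGen ElemStep d e ∧ atyp e = 0 := by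
  induction k generalizing d with
  | zero => exact ⟨d, .refl, by simp [atyp, hk, hcross]⟩
  | succ k ih =>
    obtain ⟨d₁, h₁, hX₁, hcore₁, hcross₁, hfin₁⟩ :=
      exists_reach_tailCore_none hcross hfin
    obtain ⟨d₂, h₂, hX₂, hcross₂, hfin₂⟩ :=
      exists_reach_tailX_pred (hX₁.trans hk) hcore₁ hcross₁ hfin₁
    obtain ⟨e, he, hatyp⟩ := ih hX₂ hcross₂ hfin₂
    exact ⟨e, h₁.trans (h₂.trans he), hatyp⟩

/-- **Lemma 8 (termination of the rewriting system).**  No elementary change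
increases the degree of atypicality, and every dominant weight diagram (with
finitely many symbols in the body) can be transformed by a finite sequence of
elementary changes into a typical diagram, i.e. one of atypicality `0`. -/
theorem stmt14 :
    (∀ d e : ODiag, ElemStep d e → atyp e ≤ atyp d) ∧
    (∀ d : ODiag, {s | d.body s ≠ WSym.empty}.Finite →
      ∃ e : ODiag, Relation.ReflTransGen ElemStep d e ∧ atyp e = 0) := by
  refine ⟨fun d e => atyp_le_of_elemStep, fun d hfin => ?_⟩
  obtain ⟨B, hB⟩ := hfin.bddAbove
  obtain ⟨d₁, h₁, hcross, hfin₁⟩ :=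
    exists_reach_body_crossFree (B + 1) hfin fun t ht => Nat.lt_succ_of_le (hB (by simp [ht]))
  obtain ⟨e, he, hatyp⟩ := exists_reach_atyp_eq_zero_of_body_crossFree _ rfl hcross hfin₁
  exact ⟨e, h₁.trans he, hatyp⟩
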